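/- A permutation π avoids both 231 and 321 if and only if every block in its decomposition into indecomposable permutations is of the form ℓ 1 2 ⋯ (ℓ−1) for some ℓ ≥ 1. -/

import Mathlib

/-- An occurrence of the pattern `σ` in `π` is a strictly increasing choice of
indices whose images under `π` are order-isomorphic to `σ`. -/
def IsOccurrence {m n : ℕ} (σ : Equiv.Perm (Fin m)) (π : Equiv.Perm (Fin n))
    (f : Fin m → Fin n) : Prop :=
  StrictMono f ∧ ∀ j k : Fin m, π (f j) < π (f k) ↔ σ j < σ k

/-- `numOcc σ π` is the number of occurrences of the pattern `σ` in `π`. -/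
noncomputable def numOcc {m n : ℕ} (σ : Equiv.Perm (Fin m)) (π : Equiv.Perm (Fin n)) : ℕ :=
  Nat.card {f : Fin m → Fin n // IsOccurrence σ π f}

def p123 : Equiv.Perm (Fin 3) := 1
def p132 : Equiv.Perm (Fin 3) := Equiv.swap 1 2
def p213 : Equiv.Perm (Fin 3) := Equiv.swap 0 1
def p321 : Equiv.Perm (Fin 3) := Equiv.swap 0 2
def p231 : Equiv.Perm (Fin 3) := finRotate 3
def p312 : Equiv.Perm (Fin 3) := (finRotate 3)⁻¹

/-- The composition (direct sum) `σ * τ` of two permutations. -/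
def permComp {m n : ℕ} (σ : Equiv.Perm (Fin m)) (τ : Equiv.Perm (Fin n)) :
    Equiv.Perm (Fin (m + n)) :=
  Equiv.permCongr finSumFinEquiv (Equiv.sumCongr σ τ)

/-- Permutations of arbitrary (finite) length. -/
def SPerm := Σ n : ℕ, Equiv.Perm (Fin n)

def SPerm.comp (p q : SPerm) : SPerm := ⟨p.1 + q.1, permComp p.2 q.2⟩

/-!
Avoiding both `231` and `321` means that no entry is smaller than two entries before it. By
counting, this is equivalent to `i ≤ π i + 1` at every position `i`. Under that inequality the
first entry `π 0 = ℓ - 1` forces `π i = i - 1` for `0 < i < ℓ`, so the first `ℓ` positions form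
the block `ℓ 1 2 ⋯ (ℓ - 1)` and the remaining entries again satisfy the inequality. Conversely,
the inequality holds on each such block and is preserved by direct sums.
-/

open Finset

lemma numOcc_eq_zero_iff {m n : ℕ} (σ : Equiv.Perm (Fin m)) (π : Equiv.Perm (Fin n)) :
    numOcc σ π = 0 ↔ ∀ f, ¬ IsOccurrence σ π f := by
  simp [numOcc, Nat.card_eq_zero, isEmpty_subtype, not_infinite_iff_finite, Subtype.finite]

lemma isOccurrence_iff_strictMono {m n : ℕ} (σ : Equiv.Perm (Fin m)) (π : Equiv.Perm (Fin n))
    (f : Fin m → Fin n) :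
    IsOccurrence σ π f ↔ StrictMono f ∧ StrictMono (π ∘ f ∘ σ.symm) := by
  refine and_congr_right fun _ => ⟨fun h a b hab => ?_, fun h j k => ?_⟩
  · simpa [h] using hab
  · simpa using h.lt_iff_lt (a := σ j) (b := σ k)

lemma isOccurrence_p231_iff {n : ℕ} (π : Equiv.Perm (Fin n)) (f : Fin 3 → Fin n) :
    IsOccurrence p231 π f ↔ StrictMono f ∧ π (f 2) < π (f 0) ∧ π (f 0) < π (f 1) := by
  have hsymm : p231.symm 0 = 2 ∧ p231.symm 1 = 0 ∧ p231.symm 2 = 1 := by decide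
  rw [isOccurrence_iff_strictMono, Fin.strictMono_iff_lt_succ (f := π ∘ _)]
  simp [Fin.forall_fin_two, hsymm]

lemma isOccurrence_p321_iff {n : ℕ} (π : Equiv.Perm (Fin n)) (f : Fin 3 → Fin n) :
    IsOccurrence p321 π f ↔ StrictMono f ∧ π (f 2) < π (f 1) ∧ π (f 1) < π (f 0) := by
  have hsymm : p321.symm 0 = 2 ∧ p321.symm 1 = 1 ∧ p321.symm 2 = 0 := by decide
  rw [isOccurrence_iff_strictMono, Fin.strictMono_iff_lt_succ (f := π ∘ _)]
  simp [Fin.forall_fin_two, hsymm]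

/-- `π` contains `231` or `321`. -/
def HasLowThird {n : ℕ} (π : Equiv.Perm (Fin n)) : Prop :=
  ∃ i j k : Fin n, i < j ∧ j < k ∧ π k < π i ∧ π k < π j

lemma avoids_231_321_iff_not_hasLowThird {n : ℕ} (π : Equiv.Perm (Fin n)) :
    (numOcc p231 π = 0 ∧ numOcc p321 π = 0) ↔ ¬ HasLowThird π := by
  simp only [numOcc_eq_zero_iff, isOccurrence_p231_iff, isOccurrence_p321_iff]
  constructor
  · rintro ⟨h231, h321⟩ ⟨i, j, k, hij, hjk, hki, hkj⟩
    have hf : StrictMono ![i, j, k] := Fin.strictMono_iff_lt_succ.mpr (by simp [hij, hjk])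
    rcases lt_or_gt_of_ne (π.injective.ne hij.ne) with hlt | hlt
    · exact h231 _ ⟨hf, hki, hlt⟩
    · exact h321 _ ⟨hf, hkj, hlt⟩
  · intro h
    refine ⟨fun f ⟨hf, h20, h01⟩ => ?_, fun f ⟨hf, h21, h10⟩ => ?_⟩
    · exact h ⟨f 0, f 1, f 2, hf (by decide), hf (by decide), h20, h20.trans h01⟩
    · exact h ⟨f 0, f 1, f 2, hf (by decide), hf (by decide), h21.trans h10, h21⟩

def DropsAtMostOne {n : ℕ} (π : Equiv.Perm (Fin n)) : Prop :=
  ∀ i : Fin n, (i : ℕ) ≤ π i + 1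

/-- The `π k + 1` positions carrying values `≤ π k`, together with `i` and `j`, would all lie
among the first `π k + 2` positions. -/
lemma DropsAtMostOne.not_hasLowThird {n : ℕ} {π : Equiv.Perm (Fin n)} (hπ : DropsAtMostOne π) :
    ¬ HasLowThird π := by
  rintro ⟨i, j, k, hij, hjk, hki, hkj⟩
  set S : Finset (Fin n) := (Iic (π k)).map π.symm.toEmbedding
  have hS : ∀ p, p ∈ S ↔ π p ≤ π k := by simp [S, mem_map_equiv]
  have hi : i ∉ insert j S := by simp [hS, hij.ne, hki]
  have hj : j ∉ S := by simp [hS, hkj]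
  have hbound : ∀ p ∈ insert i (insert j S), (p : ℕ) < π k + 2 := by
    have hk := hπ k
    rw [Fin.lt_def] at hij hjk
    simp only [mem_insert, hS, Fin.le_def]
    rintro p (rfl | rfl | hp)
    · omega
    · omega
    · have := hπ p
      omega
  have hcard := card_le_card_of_injOn Fin.val (t := range (π k + 2))
    (fun p hp => mem_range.mpr (hbound p hp)) Fin.val_injective.injOn
  rw [card_insert_of_notMem hi, card_insert_of_notMem hj, card_map, Fin.card_Iic,
    card_range] at hcard
  omega

/-- If `π k + 1 < k`, at most `π k` of the `k` positions before `k` carry a smaller value, so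
at least two carry a larger one. -/
lemma hasLowThird_of_not_dropsAtMostOne {n : ℕ} {π : Equiv.Perm (Fin n)}
    (hπ : ¬ DropsAtMostOne π) : HasLowThird π := by
  obtain ⟨k, hk⟩ : ∃ k : Fin n, (π k : ℕ) + 1 < k := by simpa [DropsAtMostOne] using hπ
  have hbelow : #{p ∈ Iio k | π p < π k} ≤ π k := by
    calc #{p ∈ Iio k | π p < π k} ≤ #((Iio (π k)).map π.symm.toEmbedding) :=
          card_le_card fun p hp => by simp_all [mem_map_equiv]
      _ = π k := by simp
  have habove : 1 < #{p ∈ Iio k | ¬ π p < π k} := by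
    have := card_filter_add_card_filter_not (s := Iio k) (fun p => π p < π k)
    rw [Fin.card_Iio] at this
    omega
  obtain ⟨a, ha, b, hb, hab⟩ := one_lt_card.mp habove
  simp only [mem_filter, mem_Iio, not_lt] at ha hb
  have hka : π k < π a := lt_of_le_of_ne ha.2 (π.injective.ne ha.1.ne')
  have hkb : π k < π b := lt_of_le_of_ne hb.2 (π.injective.ne hb.1.ne')
  rcases lt_or_gt_of_ne hab with h | h
  · exact ⟨a, b, k, h, hb.1, hka, hkb⟩
  · exact ⟨b, a, k, h, ha.1, hkb, hka⟩

lemma not_hasLowThird_iff_dropsAtMostOne {n : ℕ} (π : Equiv.Perm (Fin n)) :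
    ¬ HasLowThird π ↔ DropsAtMostOne π :=
  ⟨not_imp_comm.mp hasLowThird_of_not_dropsAtMostOne, DropsAtMostOne.not_hasLowThird⟩

@[simp]
lemma permComp_castAdd {m n : ℕ} (σ : Equiv.Perm (Fin m)) (τ : Equiv.Perm (Fin n)) (a : Fin m) :
    permComp σ τ (Fin.castAdd n a) = Fin.castAdd n (σ a) := by
  simp [permComp, Equiv.permCongr_apply]

@[simp]
lemma permComp_natAdd {m n : ℕ} (σ : Equiv.Perm (Fin m)) (τ : Equiv.Perm (Fin n)) (b : Fin n) :
    permComp σ τ (Fin.natAdd m b) = Fin.natAdd m (τ b) := by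
  simp [permComp, Equiv.permCongr_apply]

lemma dropsAtMostOne_permComp_iff {m n : ℕ} (σ : Equiv.Perm (Fin m)) (τ : Equiv.Perm (Fin n)) :
    DropsAtMostOne (permComp σ τ) ↔ DropsAtMostOne σ ∧ DropsAtMostOne τ := by
  simp only [DropsAtMostOne, Fin.forall_fin_add, permComp_castAdd, permComp_natAdd,
    Fin.val_castAdd, Fin.val_natAdd]
  refine and_congr_right fun _ => forall_congr' fun b => ?_
  omega

lemma dropsAtMostOne_finRotate_inv (ℓ : ℕ) : DropsAtMostOne (finRotate ℓ)⁻¹ := by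
  intro i
  obtain ⟨j, rfl⟩ := (finRotate ℓ).surjective i
  cases ℓ with
  | zero => exact j.elim0
  | succ k =>
    rw [Equiv.Perm.inv_def, Equiv.symm_apply_apply, coe_finRotate]
    split_ifs <;> omega

/-- The value `j - 1` sits at a position `≤ j`, and every position strictly between `0` and `j`
already carries a smaller value. -/
lemma DropsAtMostOne.apply_add_one_eq {n : ℕ} {π : Equiv.Perm (Fin n)} (hπ : DropsAtMostOne π)
    {i₀ : Fin n} (hi₀ : (i₀ : ℕ) = 0) {j : Fin n} (hj₀ : i₀ < j) (hj : j ≤ π i₀) :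
    (π j : ℕ) + 1 = j := by
  induction j using WellFoundedLT.induction with
  | ind j ih =>
    rw [Fin.lt_def] at hj₀
    rw [Fin.le_def] at hj
    obtain ⟨p, hp⟩ := π.surjective ⟨j - 1, by omega⟩
    have hpv : (π p : ℕ) = j - 1 := by rw [hp]
    have hpj : (p : ℕ) ≤ j := by have := hπ p; omega
    have hp₀ : i₀ < p := by
      rw [Fin.lt_def, hi₀, Nat.pos_iff_ne_zero]
      intro hp0
      have : (π i₀ : ℕ) = j - 1 := by rw [Fin.ext (hi₀.trans hp0.symm), hpv]
      omega
    rcases hpj.lt_or_eq with hlt | heq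
    · have := ih p hlt hp₀ (by rw [Fin.le_def]; omega)
      omega
    · rw [← Fin.ext heq]
      omega

lemma exists_eq_permComp {m n : ℕ} (π : Equiv.Perm (Fin (m + n)))
    (hπ : ∀ a : Fin m, (π (Fin.castAdd n a) : ℕ) < m) :
    ∃ (σ : Equiv.Perm (Fin m)) (τ : Equiv.Perm (Fin n)), π = permComp σ τ := by
  let f : Fin m → Fin m := fun a => ⟨π (Fin.castAdd n a), hπ a⟩
  have hf : f.Bijective := Finite.injective_iff_bijective.mp fun a b hab => by
    simp only [f, Fin.mk.injEq] at hab
    simpa using π.injective (Fin.ext hab)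
  have hle : ∀ b : Fin n, m ≤ (π (Fin.natAdd m b) : ℕ) := fun b => by
    by_contra! hlt
    obtain ⟨a, ha⟩ := hf.2 ⟨_, hlt⟩
    simp only [f, Fin.mk.injEq] at ha
    have := congrArg Fin.val (π.injective (Fin.ext ha))
    simp only [Fin.val_castAdd, Fin.val_natAdd] at this
    omega
  let g : Fin n → Fin n := fun b =>
    ⟨π (Fin.natAdd m b) - m, by have := hle b; have := (π (Fin.natAdd m b)).isLt; omega⟩
  have hg : g.Bijective := Finite.injective_iff_bijective.mp fun a b hab => by
    have ha := hle a
    have hb := hle b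
    simp only [g, Fin.mk.injEq] at hab
    have : π (Fin.natAdd m a) = π (Fin.natAdd m b) := Fin.ext (by omega)
    simpa using π.injective this
  refine ⟨Equiv.ofBijective f hf, Equiv.ofBijective g hg, Equiv.ext (Fin.addCases ?_ ?_)⟩
  · intro a; ext; simp [f]
  · intro b
    have := hle b
    ext
    simp only [permComp_natAdd, Equiv.ofBijective_apply, Fin.val_natAdd, g]
    omega

lemma DropsAtMostOne.eq_finRotate_inv {k : ℕ} {σ : Equiv.Perm (Fin (k + 1))}
    (hσ : DropsAtMostOne σ) (h₀ : σ 0 = Fin.last k) : σ = (finRotate (k + 1))⁻¹ := by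
  refine eq_inv_of_mul_eq_one_right (Equiv.ext fun a => ?_)
  rcases eq_or_ne a 0 with rfl | ha
  · simp [h₀]
  · have hpos : 0 < a := Fin.pos_iff_ne_zero.mpr ha
    have hσa := hσ.apply_add_one_eq rfl hpos (by rw [h₀]; exact Fin.le_last a)
    have hne : σ a ≠ Fin.last k := fun h => by simp [h] at hσa; omega
    rw [Equiv.Perm.mul_apply, Equiv.Perm.one_apply, Fin.ext_iff, coe_finRotate_of_ne_last hne,
      hσa]

lemma DropsAtMostOne.exists_eq_permComp_finRotate_inv {k m : ℕ}
    {π : Equiv.Perm (Fin (k + 1 + m))} (hπ : DropsAtMostOne π)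
    (h₀ : π (Fin.castAdd m 0) = Fin.castAdd m (Fin.last k)) :
    ∃ τ : Equiv.Perm (Fin m), DropsAtMostOne τ ∧ π = permComp (finRotate (k + 1))⁻¹ τ := by
  have hval₀ : (π (Fin.castAdd m 0) : ℕ) = k := by simp [h₀]
  obtain ⟨σ, τ, rfl⟩ := exists_eq_permComp π fun a => by
    rcases eq_or_ne a 0 with rfl | ha
    · omega
    · have := hπ.apply_add_one_eq (i₀ := Fin.castAdd m 0) rfl (j := Fin.castAdd m a)
        (Fin.strictMono_castAdd m (Fin.pos_iff_ne_zero.mpr ha))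
        (by rw [Fin.le_def, Fin.val_castAdd, hval₀]; exact Fin.is_le a)
      simp only [Fin.val_castAdd] at this
      omega
  rw [dropsAtMostOne_permComp_iff] at hπ
  refine ⟨τ, hπ.2, ?_⟩
  rw [hπ.1.eq_finRotate_inv]
  simpa using h₀

lemma dropsAtMostOne_foldr (L : List SPerm)
    (hL : ∀ q ∈ L, 1 ≤ q.1 ∧ q.2 = (finRotate q.1)⁻¹) :
    DropsAtMostOne (L.foldr SPerm.comp ⟨0, 1⟩).2 := by
  induction L with
  | nil => exact fun i => i.elim0
  | cons q L ih =>
    refine (dropsAtMostOne_permComp_iff _ _).mpr ⟨?_, ih fun p hp => hL p (.tail q hp)⟩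
    rw [(hL q (.head L)).2]
    exact dropsAtMostOne_finRotate_inv q.1

lemma DropsAtMostOne.exists_foldr_eq {n : ℕ} {π : Equiv.Perm (Fin n)} (hπ : DropsAtMostOne π) :
    ∃ L : List SPerm, (∀ q ∈ L, 1 ≤ q.1 ∧ q.2 = (finRotate q.1)⁻¹) ∧
      L.foldr SPerm.comp ⟨0, 1⟩ = ⟨n, π⟩ := by
  induction n using Nat.strong_induction_on with
  | _ n ih =>
    rcases Nat.eq_zero_or_pos n with rfl | hn
    · exact ⟨[], by simp, by rw [Subsingleton.elim π 1]; rfl⟩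
    obtain ⟨k, hk⟩ : ∃ k, (π ⟨0, hn⟩ : ℕ) = k := ⟨_, rfl⟩
    obtain ⟨m, rfl⟩ : ∃ m, n = k + 1 + m := ⟨n - (k + 1), by omega⟩
    obtain ⟨τ, hτ, rfl⟩ := hπ.exists_eq_permComp_finRotate_inv (Fin.ext hk)
    obtain ⟨L, hL, hfold⟩ := ih m (by omega) hτ
    refine ⟨⟨k + 1, (finRotate (k + 1))⁻¹⟩ :: L, ?_, ?_⟩
    · rintro q (_ | ⟨_, hq⟩)
      · exact ⟨k.succ_pos, rfl⟩
      · exact hL q hq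
    · exact congrArg (SPerm.comp _) hfold

theorem avoids_231_321_iff_blocks_rotation {n : ℕ} (π : Equiv.Perm (Fin n)) :
    (numOcc p231 π = 0 ∧ numOcc p321 π = 0) ↔
      ∃ L : List SPerm, (∀ q ∈ L, 1 ≤ q.1 ∧ q.2 = (finRotate q.1)⁻¹) ∧
        L.foldr SPerm.comp ⟨0, 1⟩ = ⟨n, π⟩ := by
  rw [avoids_231_321_iff_not_hasLowThird, not_hasLowThird_iff_dropsAtMostOne]
  refine ⟨DropsAtMostOne.exists_foldr_eq, ?_⟩
  rintro ⟨L, hL, hfold⟩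
  have := dropsAtMostOne_foldr L hL
  rwa [hfold] at this
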